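/- arXiv:0903.3766 — 3 statements merged into one kernel-verified Lean document; each statement's English description precedes it below -/
import Mathlib

section
/- Let A = ⊕_{j∈ℕ} A_j be an ℕ-graded ring that is a domain with invariant basis number, and suppose A is faithfully flat as a left A₀-module. If K is a right ideal of A₀ that is stably free but not free as a right A₀-module, then the induced right ideal KA of A (equivalently K ⊗_{A₀} A) is stably free but not free as a right A-module. -/
/-! Stable freeness passes from `K` to `KA` by flatness: extending scalars turns the split exact
sequence `A₀ⁿ → A₀ᵐ → K → 0` given by `K × A₀ⁿ ≅ A₀ᵐ` into a split sequence `Aⁿ → Aᵐ → KA → 0`,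
and the equational criterion of flatness is exactly what makes it exact in the middle.

Freeness descends along the ring retraction `π : A → A₀` onto the degree-zero part. It maps `KA`
onto `K`, and since `π` kills `KA · ker π`, the elements `y` and `π y` of `KA` have the same
coordinates modulo `ker π` in any basis of `KA`. Hence `π` of a basis of `KA` is a basis of `K`. -/

/-- A finitely generated module `M` over `R` is *stably free* if
`M ⊕ Rⁿ ≅ Rᵐ` for some nonnegative integers `n`, `m`. -/
def IsStablyFree (R : Type*) [Ring R] (M : Type*) [AddCommGroup M] [Module R M] : Prop :=
  ∃ n m : ℕ, Nonempty ((M × (Fin n → R)) ≃ₗ[R] (Fin m → R))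

/-- Flatness of a left `R`-module over a (possibly noncommutative) ring,
expressed by the standard equational criterion: every linear relation
`∑ rᵢ • xᵢ = 0` is a consequence of linear relations in `R` itself. -/
def IsFlatLeft (R M : Type*) [Ring R] [AddCommGroup M] [Module R M] : Prop :=
  ∀ (n : ℕ) (r : Fin n → R) (x : Fin n → M), ∑ i, r i • x i = 0 →
    ∃ (m : ℕ) (a : Fin n → Fin m → R) (y : Fin m → M),
      (∀ i, x i = ∑ j, a i j • y j) ∧ ∀ j, ∑ i, r i * a i j = 0

/-- Faithful flatness of a left `R`-module over a (possibly noncommutative) ring: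
`M` is flat and `I·M ≠ M` for every proper right ideal `I` of `R`
(equivalently, `- ⊗_R M` is exact and kills no nonzero right module). -/
def IsFaithfullyFlatLeft (R M : Type*) [Ring R] [AddCommGroup M] [Module R M] : Prop :=
  IsFlatLeft R M ∧
    ∀ I : Submodule Rᵐᵒᵖ R, I ≠ ⊤ →
      AddSubgroup.closure {x : M | ∃ r ∈ I, ∃ m : M, r • m = x} ≠ ⊤

open MulOpposite

namespace LinearMap

variable {R S : Type*} [Semiring R] [Semiring S] (ι : R →+* S) {m n : Type*} [Fintype m]
  [DecidableEq m]

noncomputable def piExtendScalars (φ : (m → R) →ₗ[R] (n → R)) : (m → S) →ₗ[S] (n → S) :=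
  Matrix.toLinearMapRight' ((LinearMap.toMatrixRight' φ).map ι)

theorem piExtendScalars_apply_comp (φ : (m → R) →ₗ[R] (n → R)) (v : m → R) :
    piExtendScalars ι φ (ι ∘ v) = ι ∘ φ v := by
  funext j
  conv_rhs => rw [← LinearMap.toMatrixRight'.symm_apply_apply φ]
  exact (RingHom.map_vecMul ι _ v j).symm

theorem pi_ext_ringHom {M : Type*} [AddCommMonoid M] [Module S M] {f g : (m → S) →ₗ[S] M}
    (h : ∀ v : m → R, f (ι ∘ v) = g (ι ∘ v)) : f = g :=
  (Pi.basisFun S m).ext fun i => by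
    have hsingle : ι ∘ Pi.single i 1 = Pi.single i 1 := by
      rw [← ι.map_one]
      exact (Pi.single_op (fun _ => ι) (fun _ => ι.map_zero) i 1).symm
    simpa only [Pi.basisFun_apply, hsingle] using h (Pi.single i 1)

end LinearMap

theorem Finsupp.semilinearMap_apply_linearCombination {R S M N ι : Type*} [Semiring R]
    [Semiring S] {τ : S →+* R} [AddCommMonoid M] [Module R M] [AddCommMonoid N] [Module S N]
    (r : N →ₛₗ[τ] M) (v : ι → N) (l : ι →₀ S) :
    r (Finsupp.linearCombination S v l) =
      Finsupp.linearCombination R (r ∘ v) (l.mapRange τ (map_zero τ)) := by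
  induction l using Finsupp.induction_linear with
  | zero => simp
  | add l l' hl hl' => simp [Finsupp.mapRange_add, hl, hl']
  | single j s => simp

theorem Module.Free.of_semilinear_retraction {R S M N : Type*} [Semiring R] [Semiring S]
    {σ : R →+* S} {τ : S →+* R} [RingHomCompTriple σ τ (RingHom.id R)] [AddCommMonoid M]
    [Module R M] [AddCommMonoid N] [Module S N] [Module.Free S N] (i : M →ₛₗ[σ] N) (r : N →ₛₗ[τ] M)
    (hri : ∀ x, r (i x) = x) (hcoord : ∀ (f : N →ₗ[S] S) (y : N), τ (f (i (r y))) = τ (f y)) :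
    Module.Free R M := by
  let b := Module.Free.chooseBasis S N
  let Φ : M →ₗ[R] (_ →₀ R) :=
    Finsupp.mapRange.linearMap τ.toSemilinearMap ∘ₛₗ b.repr.toLinearMap ∘ₛₗ i
  have hΦ : ∀ j, Φ (r (b j)) = Finsupp.single j 1 := fun j => by
    ext k
    simpa [Φ, Finsupp.single_apply, apply_ite τ] using hcoord (b.coord k) (b j)
  refine Module.Free.of_basis (Module.Basis.ofRepr
    (LinearEquiv.ofLinearMap Φ (Finsupp.linearCombination R (r ∘ b)) ?_ ?_))
  · refine Finsupp.lhom_ext fun j s => ?_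
    simp [hΦ]
  · refine LinearMap.ext fun x => ?_
    simp [Φ, ← Finsupp.semilinearMap_apply_linearCombination, hri]

theorem IsStablyFree.exists_split_exact_linearCombination {R M : Type*} [Ring R]
    [AddCommGroup M] [Module R M] (h : IsStablyFree R M) :
    ∃ (n m : ℕ) (t : (Fin n → R) →ₗ[R] (Fin m → R)) (q : (Fin m → R) →ₗ[R] (Fin n → R))
      (x : Fin m → M), q ∘ₗ t = LinearMap.id ∧
        Function.Exact t (Fintype.linearCombination R x) ∧
        Function.Surjective (Fintype.linearCombination R x) := by
  obtain ⟨n, m, ⟨θ⟩⟩ := h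
  let x : Fin m → M := fun i => (θ.symm (Pi.single i 1)).1
  have hx : Fintype.linearCombination R x = LinearMap.fst R M _ ∘ₗ θ.symm.toLinearMap :=
    (Pi.basisFun _ _).ext fun i => by simp [x]
  refine ⟨n, m, θ.toLinearMap ∘ₗ LinearMap.inr R M _, LinearMap.snd R M _ ∘ₗ θ.symm.toLinearMap,
    x, ?_, ?_, ?_⟩
  · ext
    simp
  · rw [hx, θ.conj_exact_iff_exact]
    exact Function.Exact.inr_fst
  · rw [hx]
    exact Prod.fst_surjective.comp θ.symm.surjective

theorem GradedRing.exists_retraction_of_coe_eq_gradeZero {ι A T : Type*} [DecidableEq ι]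
    [AddCommMonoid ι] [PartialOrder ι] [CanonicallyOrderedAdd ι] [Semiring A] [SetLike T A]
    [AddSubmonoidClass T A] (𝒜 : ι → T) [GradedRing 𝒜] {U : Type*} [SetLike U A]
    [SubsemiringClass U A] (A₀ : U) (hA₀ : (A₀ : Set A) = 𝒜 0) :
    ∃ π : A →+* A₀, ∀ a : A₀, π a = a := by
  refine ⟨(projZeroRingHom 𝒜).codRestrict A₀ fun x => ?_, fun a => Subtype.ext ?_⟩
  · rw [← SetLike.mem_coe, hA₀]
    exact SetLike.coe_mem _
  · have ha : (a : A) ∈ 𝒜 0 := by rw [← SetLike.mem_coe, ← hA₀]; exact a.2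
    simp [DirectSum.decompose_of_mem_same 𝒜 ha]

section InducedRightIdeal

variable {A : Type*} [Ring A] {A₀ : Subring A}

abbrev inducedRightIdeal (K : Submodule A₀ᵐᵒᵖ A₀) : Submodule Aᵐᵒᵖ A :=
  Submodule.span Aᵐᵒᵖ (Subtype.val '' (K : Set A₀))

theorem Fintype.linearCombination_op_subtype_comp {m : Type*} [Fintype m] (x : m → A₀)
    (w : m → A₀ᵐᵒᵖ) :
    Fintype.linearCombination Aᵐᵒᵖ (fun i => (x i : A)) (RingHom.op A₀.subtype ∘ w) =
      (Fintype.linearCombination A₀ᵐᵒᵖ x w : A) := by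
  simp [Fintype.linearCombination_apply]

theorem range_linearCombination_coe_eq_inducedRightIdeal {m : Type*} [Fintype m] [DecidableEq m]
    (x : m → A₀) :
    LinearMap.range (Fintype.linearCombination Aᵐᵒᵖ (fun i => (x i : A))) =
      inducedRightIdeal (LinearMap.range (Fintype.linearCombination A₀ᵐᵒᵖ x)) := by
  apply le_antisymm
  · rw [Fintype.range_linearCombination]
    refine Submodule.span_mono (Set.range_subset_iff.2 fun i => ⟨x i, ?_, rfl⟩)
    exact ⟨Pi.single i 1, by simp⟩
  · refine Submodule.span_le.2 ?_
    rintro _ ⟨_, ⟨w, rfl⟩, rfl⟩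
    exact ⟨RingHom.op A₀.subtype ∘ w, Fintype.linearCombination_op_subtype_comp x w⟩

theorem Function.Exact.piExtendScalars_of_isFlatLeft (hflat : IsFlatLeft A₀ A) {n m : ℕ}
    {t : (Fin n → A₀ᵐᵒᵖ) →ₗ[A₀ᵐᵒᵖ] (Fin m → A₀ᵐᵒᵖ)} {x : Fin m → A₀}
    (h : Function.Exact t (Fintype.linearCombination A₀ᵐᵒᵖ x)) :
    Function.Exact (t.piExtendScalars (RingHom.op A₀.subtype))
      (Fintype.linearCombination Aᵐᵒᵖ (fun i => (x i : A))) := by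
  refine LinearMap.exact_of_comp_of_mem_range ?_ fun v hv => ?_
  · refine LinearMap.pi_ext_ringHom (RingHom.op A₀.subtype) fun w => ?_
    rw [LinearMap.comp_apply, LinearMap.piExtendScalars_apply_comp,
      Fintype.linearCombination_op_subtype_comp, h.apply_apply_eq_zero]
    rfl
  · have hrel : ∑ i, x i • unop (v i) = 0 := by
      simpa [Fintype.linearCombination_apply, Subring.smul_def] using hv
    obtain ⟨k, a, y, hv_eq, ha⟩ := hflat m x (fun i => unop (v i)) hrel
    have hcol : ∀ j, ∃ w, t w = fun i => op (a i j) := fun j => (h _).mp (by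
      simpa [Fintype.linearCombination_apply] using ha j)
    choose w hw using hcol
    refine ⟨∑ j, op (y j) • (RingHom.op A₀.subtype ∘ w j), ?_⟩
    simp only [map_sum, map_smul, LinearMap.piExtendScalars_apply_comp, hw]
    funext i
    apply unop_injective
    simp [hv_eq i, Subring.smul_def]

theorem isStablyFree_inducedRightIdeal (hflat : IsFlatLeft A₀ A) {K : Submodule A₀ᵐᵒᵖ A₀}
    (hK : IsStablyFree A₀ᵐᵒᵖ K) : IsStablyFree Aᵐᵒᵖ (inducedRightIdeal K) := by
  obtain ⟨n, m, t, q, x, hqt, hexact, hsurj⟩ := hK.exists_split_exact_linearCombination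
  let ι := RingHom.op A₀.subtype
  have hx : Fintype.linearCombination A₀ᵐᵒᵖ (fun i => (x i : A₀)) =
      K.subtype ∘ₗ Fintype.linearCombination A₀ᵐᵒᵖ x :=
    (Pi.basisFun _ _).ext fun i => by simp
  have hrange : LinearMap.range (Fintype.linearCombination Aᵐᵒᵖ (fun i => (x i : A))) =
      inducedRightIdeal K := by
    rw [range_linearCombination_coe_eq_inducedRightIdeal, hx, LinearMap.range_comp,
      LinearMap.range_eq_top.2 hsurj, Submodule.map_top, Submodule.range_subtype]
  let g := (Fintype.linearCombination Aᵐᵒᵖ (fun i => (x i : A))).codRestrict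
    (inducedRightIdeal K) fun v => hrange ▸ LinearMap.mem_range_self _ v
  have hexactA : Function.Exact (t.piExtendScalars ι) g := by
    rw [← (inducedRightIdeal K).injective_subtype.comp_exact_iff_exact]
    refine Function.Exact.piExtendScalars_of_isFlatLeft hflat ?_
    rwa [hx, K.injective_subtype.comp_exact_iff_exact]
  have hg : Function.Surjective g := by
    rintro ⟨y, hy⟩
    obtain ⟨v, rfl⟩ := (hrange ▸ hy : y ∈ LinearMap.range _)
    exact ⟨v, rfl⟩
  have hqtA : q.piExtendScalars ι ∘ₗ t.piExtendScalars ι = LinearMap.id :=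
    LinearMap.pi_ext_ringHom ι fun w => by
      simp [LinearMap.piExtendScalars_apply_comp, ← LinearMap.comp_apply, hqt]
  exact ⟨n, m, ⟨LinearEquiv.prodComm _ _ _ ≪≫ₗ (hexactA.splitInjectiveEquiv hg ⟨_, hqtA⟩).1.symm⟩⟩

namespace inducedRightIdeal

variable (K : Submodule A₀ᵐᵒᵖ A₀)

theorem coe_mem {k : A₀} (hk : k ∈ K) : (k : A) ∈ inducedRightIdeal K :=
  Submodule.subset_span ⟨k, hk, rfl⟩

def inclusion : K →ₛₗ[RingHom.op A₀.subtype] inducedRightIdeal K where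
  toFun k := ⟨k, coe_mem K k.2⟩
  map_add' _ _ := rfl
  map_smul' _ _ := rfl

@[simp]
theorem coe_inclusion (k : K) : (inclusion K k : A) = k := rfl

variable {K} (π : A →+* A₀)

theorem retraction_mem (hπ : ∀ a : A₀, π a = a) {x : A} (hx : x ∈ inducedRightIdeal K) :
    π x ∈ K := by
  induction hx using Submodule.span_induction with
  | mem x h =>
    obtain ⟨k, hk, rfl⟩ := h
    rwa [hπ]
  | zero => simp
  | add x y _ _ hx hy => simpa using add_mem hx hy
  | smul c x _ hx => simpa using K.smul_mem (op (π (unop c))) hx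

def retraction (hπ : ∀ a : A₀, π a = a) : inducedRightIdeal K →ₛₗ[RingHom.op π] K where
  toFun x := ⟨π x, retraction_mem π hπ x.2⟩
  map_add' x y := by ext; simp
  map_smul' c x := by ext; simp

@[simp]
theorem coe_retraction (hπ : ∀ a : A₀, π a = a) (x : inducedRightIdeal K) :
    (retraction π hπ x : A₀) = π x := rfl

theorem retraction_inclusion (hπ : ∀ a : A₀, π a = a) (k : K) :
    retraction π hπ (inclusion K k) = k := by
  ext; simp [hπ]

theorem op_apply_inclusion_retraction (hπ : ∀ a : A₀, π a = a)
    (f : inducedRightIdeal K →ₗ[Aᵐᵒᵖ] Aᵐᵒᵖ) (y : inducedRightIdeal K) :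
    RingHom.op π (f (inclusion K (retraction π hπ y))) = RingHom.op π (f y) := by
  obtain ⟨y, hy⟩ := y
  induction hy using Submodule.span_induction with
  | mem x h =>
    obtain ⟨k, hk, rfl⟩ := h
    congr 3
    ext
    simp [hπ]
  | zero =>
    rw [show (⟨0, _⟩ : inducedRightIdeal K) = 0 from rfl]
    simp
  | add x y hx' hy' hx hy =>
    rw [show (⟨x + y, _⟩ : inducedRightIdeal K) = ⟨x, hx'⟩ + ⟨y, hy'⟩ from rfl]
    simp only [map_add, hx, hy]
  | smul c x hx' hx =>
    rw [show (⟨c • x, _⟩ : inducedRightIdeal K) = c • ⟨x, hx'⟩ from rfl]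
    simp only [map_smulₛₗ, smul_eq_mul, map_mul, hx]
    simp [hπ]

theorem free_of_free [Module.Free Aᵐᵒᵖ (inducedRightIdeal K)] (hπ : ∀ a : A₀, π a = a) :
    Module.Free A₀ᵐᵒᵖ K :=
  haveI : RingHomCompTriple (RingHom.op A₀.subtype) (RingHom.op π) (RingHom.id _) :=
    ⟨by ext; simp [hπ]⟩
  Module.Free.of_semilinear_retraction (inclusion K) (retraction π hπ)
    (retraction_inclusion π hπ) (op_apply_inclusion_retraction π hπ)

end inducedRightIdeal

end InducedRightIdeal

theorem stablyFree_nonfree_lift_of_nat_graded_general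
    {A : Type*} [Ring A]
    (𝒜 : ℕ → AddSubgroup A) [GradedRing 𝒜]
    (A₀ : Subring A) (hA₀ : (A₀ : Set A) = (𝒜 0 : Set A))
    (hff : IsFaithfullyFlatLeft A₀ A)
    (K : Submodule A₀ᵐᵒᵖ A₀)
    (hsf : IsStablyFree A₀ᵐᵒᵖ K) (hnf : ¬ Module.Free A₀ᵐᵒᵖ K) :
    IsStablyFree Aᵐᵒᵖ (Submodule.span Aᵐᵒᵖ (Subtype.val '' (K : Set A₀))) ∧
      ¬ Module.Free Aᵐᵒᵖ (Submodule.span Aᵐᵒᵖ (Subtype.val '' (K : Set A₀))) := by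
  obtain ⟨π, hπ⟩ := GradedRing.exists_retraction_of_coe_eq_gradeZero 𝒜 A₀ hA₀
  exact ⟨isStablyFree_inducedRightIdeal hff.1 hsf,
    fun _ => hnf (inducedRightIdeal.free_of_free π hπ)⟩

/-- Let `A = ⊕_{j∈ℕ} A_j` be an `ℕ`-graded ring which is a domain
with invariant basis number, faithfully flat as a left module over its degree-zero
subring `A₀`.  If `K` is a right ideal of `A₀` which is stably free but not free as a
right `A₀`-module, then the induced right ideal `KA` of `A` is stably free but not
free as a right `A`-module. -/
theorem stablyFree_nonfree_lift_of_nat_graded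
    {A : Type*} [Ring A] [IsDomain A] [InvariantBasisNumber A]
    (𝒜 : ℕ → AddSubgroup A) [GradedRing 𝒜]
    (A₀ : Subring A) [InvariantBasisNumber A₀] (hA₀ : (A₀ : Set A) = (𝒜 0 : Set A))
    (hff : IsFaithfullyFlatLeft A₀ A)
    (K : Submodule A₀ᵐᵒᵖ A₀)
    (hsf : IsStablyFree A₀ᵐᵒᵖ K) (hnf : ¬ Module.Free A₀ᵐᵒᵖ K) :
    IsStablyFree Aᵐᵒᵖ (Submodule.span Aᵐᵒᵖ (Subtype.val '' (K : Set A₀))) ∧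
      ¬ Module.Free Aᵐᵒᵖ (Submodule.span Aᵐᵒᵖ (Subtype.val '' (K : Set A₀))) :=
  stablyFree_nonfree_lift_of_nat_graded_general 𝒜 A₀ hA₀ hff K hsf hnf
end

section
/- Let G be an ordered-like additive semigroup and let A = ⊕_{σ∈G} A_σ be a G-graded ring that is a graded domain (the product of two nonzero homogeneous elements is nonzero). Then A₀ is a completely prime subring of A: for any two nonzero elements a, b of A, if ab ∈ A₀ then a ∈ A₀ or b ∈ A₀. -/
/-!
Being ordered-like says that `G` has unique sums. As `G` is then cancellative, it embeds into its
Grothendieck group, which inherits unique sums after translating finite sets into the image of `G`,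
and hence has two unique sums by Strojnowski's theorem; so `G` has two unique sums.
If `(i, j)` is a uniquely represented pair in `supp a × supp b`, the `(i + j)`-component of `a * b`
is `aᵢ * bⱼ ≠ 0`, which forces `i + j = 0`, so `i = j = 0` as `G` has no nonzero units.
Two distinct such pairs are therefore impossible, so both supports are `{0}`.
-/

open Pointwise

/-- An additive commutative semigroup with zero is *ordered-like* if `0` is its only
invertible element and for any two finite nonempty subsets `S₁`, `S₂` with
`S₁ + S₂ ≠ {0}` there is `c ∈ S₁ + S₂` with exactly one representation `c = a + b`,
`a ∈ S₁`, `b ∈ S₂`. -/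
def OrderedLike (G : Type*) [AddCommMonoid G] [DecidableEq G] : Prop :=
  (∀ a b : G, a + b = 0 → a = 0) ∧
    ∀ S₁ S₂ : Finset G, S₁.Nonempty → S₂.Nonempty → S₁ + S₂ ≠ ({0} : Finset G) →
      ∃ c ∈ S₁ + S₂, ∃! p : G × G, p.1 ∈ S₁ ∧ p.2 ∈ S₂ ∧ p.1 + p.2 = c

open Finset

namespace Algebra.GrothendieckAddGroup

variable {M : Type*} [AddCommMonoid M]

theorem exists_forall_add_eq_of (A : Finset (GrothendieckAddGroup M)) :
    ∃ (s : M) (f : A → M), ∀ x : A, (x : GrothendieckAddGroup M) + of s = of (f x) := by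
  obtain ⟨s, f, hf⟩ := (AddLocalization.addMonoidOf ⊤).isLocalizationMap.surj_pi_of_finite
    (f := (of : M →+ GrothendieckAddGroup M)) ((↑) : A → GrothendieckAddGroup M)
  exact ⟨s, f, hf⟩

instance [IsCancelAdd M] [UniqueSums M] : UniqueSums (GrothendieckAddGroup M) where
  uniqueAdd_of_nonempty {A B} hA hB := by
    classical
    obtain ⟨s, f, hf⟩ := exists_forall_add_eq_of A
    obtain ⟨t, g, hg⟩ := exists_forall_add_eq_of B
    obtain ⟨_, hx, _, hy, hu⟩ := UniqueSums.uniqueAdd_of_nonempty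
      (hA.attach.image f) (hB.attach.image g)
    obtain ⟨x, -, rfl⟩ := mem_image.1 hx
    obtain ⟨y, -, rfl⟩ := mem_image.1 hy
    refine ⟨x, x.2, y, y.2, fun a b ha hb hab => ?_⟩
    -- `s` and `t` are common denominators: they translate `A` and `B` into the image of `M`.
    have hshift : ∀ (c d : GrothendieckAddGroup M), c + of s + (d + of t) = c + d + of (s + t) :=
      fun c d => by rw [map_add]; abel
    have hfg : f ⟨a, ha⟩ + g ⟨b, hb⟩ = f x + g y := of_injective <| by
      rw [map_add, map_add, ← hf, ← hg, ← hf, ← hg, hshift, hshift, hab]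
    obtain ⟨hfa, hgb⟩ := hu (mem_image_of_mem f (mem_attach _ ⟨a, ha⟩))
      (mem_image_of_mem g (mem_attach _ ⟨b, hb⟩)) hfg
    exact ⟨add_right_cancel ((hf ⟨a, ha⟩).trans ((congrArg of hfa).trans (hf x).symm)),
      add_right_cancel ((hg ⟨b, hb⟩).trans ((congrArg of hgb).trans (hg y).symm))⟩

end Algebra.GrothendieckAddGroup

theorem UniqueSums.toTwoUniqueSums_of_addCommMonoid {M : Type*} [AddCommMonoid M]
    [UniqueSums M] : TwoUniqueSums M :=
  have := UniqueSums.toIsCancelAdd (G := M)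
  .of_injective_addHom Algebra.GrothendieckAddGroup.of.toAddHom
    Algebra.GrothendieckAddGroup.of_injective UniqueSums.toTwoUniqueSums_of_addGroup

theorem Finset.eq_singleton_zero_of_forall_uniqueAdd {M : Type*} [AddCommMonoid M]
    [TwoUniqueSums M] [Subsingleton (AddUnits M)] {A B : Finset M} (hA : A.Nonempty)
    (hB : B.Nonempty) (h : ∀ a ∈ A, ∀ b ∈ B, UniqueAdd A B a b → a + b = 0) :
    A = {0} ∧ B = {0} := by
  have hcard : #A * #B ≤ 1 := by
    by_contra! hlt
    obtain ⟨p, hp, q, hq, hne, hup, huq⟩ := TwoUniqueSums.uniqueAdd_of_one_lt_card hlt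
    rw [mem_product] at hp hq
    obtain ⟨hp₁, hp₂⟩ := add_eq_zero.1 (h _ hp.1 _ hp.2 hup)
    obtain ⟨hq₁, hq₂⟩ := add_eq_zero.1 (h _ hq.1 _ hq.2 huq)
    exact hne (Prod.ext (hp₁.trans hq₁.symm) (hp₂.trans hq₂.symm))
  obtain ⟨a, rfl⟩ := card_eq_one.1 (by nlinarith [hA.card_pos, hB.card_pos] : #A = 1)
  obtain ⟨b, rfl⟩ := card_eq_one.1 (by nlinarith [hA.card_pos, hB.card_pos] : #B = 1)
  obtain ⟨rfl, rfl⟩ := add_eq_zero.1 <| h a (mem_singleton_self a) b (mem_singleton_self b)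
    fun _ _ ha hb _ => ⟨mem_singleton.1 ha, mem_singleton.1 hb⟩
  exact ⟨rfl, rfl⟩

namespace OrderedLike

variable {G : Type*} [AddCommMonoid G] [DecidableEq G]

theorem subsingleton_addUnits (hG : OrderedLike G) : Subsingleton (AddUnits G) :=
  subsingleton_of_forall_eq 0 fun u => AddUnits.ext (hG.1 _ _ u.add_neg)

theorem uniqueSums (hG : OrderedLike G) : UniqueSums G where
  uniqueAdd_of_nonempty {A B} hA hB := by
    have := hG.subsingleton_addUnits
    by_cases hAB : A + B = {0}
    · have hzero : ∀ a ∈ A, ∀ b ∈ B, a = 0 ∧ b = 0 := fun a ha b hb =>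
        add_eq_zero.1 (mem_singleton.1 (hAB ▸ add_mem_add ha hb))
      obtain ⟨a, ha⟩ := hA
      obtain ⟨b, hb⟩ := hB
      obtain ⟨rfl, rfl⟩ := hzero a ha b hb
      exact ⟨0, ha, 0, hb, fun a' b' ha' hb' _ => hzero a' ha' b' hb'⟩
    · obtain ⟨_, -, ⟨a, b⟩, ⟨ha, hb, rfl⟩, hu⟩ := hG.2 A B hA hB hAB
      exact ⟨a, ha, b, hb, fun a' b' ha' hb' he => Prod.ext_iff.1 (hu (a', b') ⟨ha', hb', he⟩)⟩

end OrderedLike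

namespace DirectSum

theorem support_decompose_nonempty {ι M σ : Type*} [DecidableEq ι] [AddCommMonoid M] [SetLike σ M]
    [AddSubmonoidClass σ M] (ℳ : ι → σ) [Decomposition ℳ] [∀ i (x : ℳ i), Decidable (x ≠ 0)]
    {m : M} (hm : m ≠ 0) : (decompose ℳ m).support.Nonempty := by
  rw [nonempty_iff_ne_empty, Ne, DFinsupp.support_eq_empty, ← decompose_zero ℳ,
    (decompose ℳ).injective.eq_iff]
  exact hm

variable {ι A σ : Type*} [AddMonoid ι] [DecidableEq ι] [Semiring A] [SetLike σ A]
  [AddSubmonoidClass σ A] (𝒜 : ι → σ) [GradedRing 𝒜] [∀ i (x : 𝒜 i), Decidable (x ≠ 0)]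

theorem coe_decompose_mul_add_of_uniqueAdd {a b : A} {i j : ι}
    (h : UniqueAdd (decompose 𝒜 a).support (decompose 𝒜 b).support i j)
    (hi : i ∈ (decompose 𝒜 a).support) (hj : j ∈ (decompose 𝒜 b).support) :
    (decompose 𝒜 (a * b) (i + j) : A) = decompose 𝒜 a i * decompose 𝒜 b j := by
  rw [decompose_mul, coe_mul_apply]
  refine sum_eq_single_of_mem (i, j) (mem_filter.2 ⟨mem_product.2 ⟨hi, hj⟩, rfl⟩) ?_
  rintro ⟨x, y⟩ hxy hne
  rw [mem_filter, mem_product] at hxy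
  exact absurd (Prod.ext_iff.2 (h hxy.1.1 hxy.1.2 hxy.2)) hne

theorem add_eq_of_uniqueAdd_of_mul_mem
    (hdom : ∀ (i j : ι) (x y : A), x ∈ 𝒜 i → y ∈ 𝒜 j → x ≠ 0 → y ≠ 0 → x * y ≠ 0)
    {a b : A} {i j k : ι} (hab : a * b ∈ 𝒜 k)
    (h : UniqueAdd (decompose 𝒜 a).support (decompose 𝒜 b).support i j)
    (hi : i ∈ (decompose 𝒜 a).support) (hj : j ∈ (decompose 𝒜 b).support) : i + j = k := by
  by_contra hne
  refine hdom i j _ _ (decompose 𝒜 a i).2 (decompose 𝒜 b j).2 ?_ ?_ ?_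
  · simpa using DFinsupp.mem_support_iff.1 hi
  · simpa using DFinsupp.mem_support_iff.1 hj
  · rw [← coe_decompose_mul_add_of_uniqueAdd 𝒜 h hi hj, decompose_of_mem_ne 𝒜 hab (Ne.symm hne)]

end DirectSum

open DirectSum in
/-- If `G` is an ordered-like additive semigroup and
`A = ⊕_{σ∈G} A_σ` is a `G`-graded ring which is a graded domain (the product of two
nonzero homogeneous elements is nonzero), then `A₀ = 𝒜 0` is a completely prime
subring of `A`: for nonzero `a b : A` with `a * b ∈ 𝒜 0` we have `a ∈ 𝒜 0` or `b ∈ 𝒜 0`. -/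
theorem gradeZero_completelyPrime_of_orderedLike
    {G : Type*} [AddCommMonoid G] [DecidableEq G] (hG : OrderedLike G)
    {A : Type*} [Ring A] (𝒜 : G → AddSubgroup A) [GradedRing 𝒜]
    (hdom : ∀ (i j : G) (a b : A), a ∈ 𝒜 i → b ∈ 𝒜 j → a ≠ 0 → b ≠ 0 → a * b ≠ 0)
    (a b : A) (ha : a ≠ 0) (hb : b ≠ 0) (hab : a * b ∈ 𝒜 0) :
    a ∈ 𝒜 0 ∨ b ∈ 𝒜 0 := by
  classical
  have := hG.subsingleton_addUnits
  have := hG.uniqueSums.toTwoUniqueSums_of_addCommMonoid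
  have hsupp := eq_singleton_zero_of_forall_uniqueAdd (support_decompose_nonempty 𝒜 ha)
    (support_decompose_nonempty 𝒜 hb) fun _ hi _ hj hu =>
      add_eq_of_uniqueAdd_of_mul_mem 𝒜 hdom hab hu hi hj
  left
  rw [← sum_support_decompose 𝒜 a, hsupp.1, Finset.sum_singleton]
  exact SetLike.coe_mem _
end

section
/- Let G be an arbitrary abelian additive semigroup with zero and let A = ⊕_{σ∈G} A_σ be a G-graded ring that is a graded domain (the product of two nonzero homogeneous elements is nonzero). If A₀ is a completely prime subring of A, then A₀ is a strongly completely prime subring of A: for any two nonzero elements a, b of A, if ab ∈ A₀ then a ∈ A₀ and b ∈ A₀. -/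
/-!
If `a, b ≠ 0`, `a * b ∈ A₀` and, say, `a ∈ A₀`, then for `j ≠ 0` the degree-`j` component of
`a * b` is `a * b_j`, which vanishes; since `a` is homogeneous and nonzero, the graded domain
property forces `b_j = 0`, so `b ∈ A₀`. Complete primality supplies the factor lying in `A₀`.
-/

open DirectSum

namespace DirectSum

variable {ι M σ : Type*} [DecidableEq ι] [AddCommMonoid M] [SetLike σ M] [AddSubmonoidClass σ M]
  (ℳ : ι → σ) [Decomposition ℳ]

theorem mem_of_decompose_eq_zero_of_ne {x : M} {i : ι}
    (h : ∀ j, j ≠ i → (decompose ℳ x j : M) = 0) : x ∈ ℳ i := by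
  have hx : decompose ℳ x = of (fun i ↦ ℳ i) i (decompose ℳ x i) := by
    ext j
    rcases eq_or_ne j i with rfl | hj
    · rw [of_eq_same]
    · rw [of_eq_of_ne _ _ _ hj, h j hj, ZeroMemClass.coe_zero]
  rw [← (decompose ℳ).symm_apply_apply x, hx, decompose_symm_of]
  exact SetLike.coe_mem _

end DirectSum

section GradeZero

variable {ι A σ : Type*} [DecidableEq ι] [AddMonoid ι] [Semiring A] [SetLike σ A]
  [AddSubmonoidClass σ A] (𝒜 : ι → σ) [GradedRing 𝒜] {a b : A}

theorem mem_zero_of_mul_mem_zero_of_left_mem_zero (ha : a ∈ 𝒜 0)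
    (hreg : ∀ j y, y ∈ 𝒜 j → a * y = 0 → y = 0) (hab : a * b ∈ 𝒜 0) : b ∈ 𝒜 0 :=
  mem_of_decompose_eq_zero_of_ne 𝒜 fun j hj ↦ hreg j _ (decompose 𝒜 b j).2 <| by
    rw [← coe_decompose_mul_of_left_mem_zero 𝒜 ha, decompose_of_mem_ne 𝒜 hab hj.symm]

theorem mem_zero_of_mul_mem_zero_of_right_mem_zero (hb : b ∈ 𝒜 0)
    (hreg : ∀ j x, x ∈ 𝒜 j → x * b = 0 → x = 0) (hab : a * b ∈ 𝒜 0) : a ∈ 𝒜 0 :=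
  mem_of_decompose_eq_zero_of_ne 𝒜 fun j hj ↦ hreg j _ (decompose 𝒜 a j).2 <| by
    rw [← coe_decompose_mul_of_right_mem_zero 𝒜 hb, decompose_of_mem_ne 𝒜 hab hj.symm]

end GradeZero

/-- Let `G` be an abelian additive semigroup with zero and
`A = ⊕_{σ∈G} A_σ` a `G`-graded ring which is a graded domain (the product of two
nonzero homogeneous elements is nonzero).  If `A₀ = 𝒜 0` is a completely prime
subring of `A`, then it is strongly completely prime: for nonzero `a b : A` with
`a * b ∈ 𝒜 0` we have `a ∈ 𝒜 0` and `b ∈ 𝒜 0`. -/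
theorem gradeZero_stronglyCompletelyPrime_of_completelyPrime
    {G : Type*} [AddCommMonoid G] [DecidableEq G]
    {A : Type*} [Ring A] (𝒜 : G → AddSubgroup A) [GradedRing 𝒜]
    (hdom : ∀ (i j : G) (a b : A), a ∈ 𝒜 i → b ∈ 𝒜 j → a ≠ 0 → b ≠ 0 → a * b ≠ 0)
    (hcp : ∀ a b : A, a ≠ 0 → b ≠ 0 → a * b ∈ 𝒜 0 → a ∈ 𝒜 0 ∨ b ∈ 𝒜 0)
    (a b : A) (ha : a ≠ 0) (hb : b ≠ 0) (hab : a * b ∈ 𝒜 0) :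
    a ∈ 𝒜 0 ∧ b ∈ 𝒜 0 := by
  rcases hcp a b ha hb hab with ha0 | hb0
  · refine ⟨ha0, mem_zero_of_mul_mem_zero_of_left_mem_zero 𝒜 ha0 ?_ hab⟩
    exact fun j y hy hay ↦ by_contra fun hy0 ↦ hdom 0 j a y ha0 hy ha hy0 hay
  · refine ⟨mem_zero_of_mul_mem_zero_of_right_mem_zero 𝒜 hb0 ?_ hab, hb0⟩
    exact fun j x hx hxb ↦ by_contra fun hx0 ↦ hdom j 0 x b hx hb0 hx0 hb hxb
end
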